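/- For real constants c₀,…,c₈ with c₁ ≠ 0, the functions q(x⁴) = (c₁x⁴ + c₀)², u(x³) = (c₂x³ + c₃)², h(x²) = (c₄x² + c₅)², λ₄(x⁴) = c₆(c₁x⁴ + c₀), λ₁(x¹) = c₇cos(c₁x¹) + c₈sin(c₁x¹) satisfy the system: 2h²h''' − h'(2hh'' − (h')²) = 0, 2qq'' − (q')² = 0, 2huu'' + 2huh'' − h(u')² − u(h')² = 0, 4qλ₁'' + (q')²λ₁ = 0, and 2qλ₄' − λ₄q' = 0 (each on the domain where the relevant denominator-free identity makes sense). -/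

import Mathlib

/-!
Each of `q`, `u`, `h` is the square of an affine function `g`, so `f = g²` has
`f' = 2gg'` and `f'' = 2g'²`, whence `2ff'' = (f')²` and `f''' = 0`; all equations on
`q`, `u`, `h` and `λ₄ = c₆ g` follow from this. The equation for `λ₁` holds because
`λ₁'' = -c₁²λ₁` while `(q')² = 4c₁²q`.
-/

open Real

section Affine

variable (a b : ℝ)

theorem deriv_const_mul_affine (c : ℝ) :
    deriv (fun x : ℝ => c * (a * x + b)) = fun _ => c * a := by
  funext x
  exact ((((hasDerivAt_id' x).const_mul a).add_const b).const_mul c).deriv.trans (by ring)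

theorem deriv_affine_sq :
    deriv (fun x : ℝ => (a * x + b) ^ 2) = fun x => 2 * a * (a * x + b) := by
  funext x
  exact ((((hasDerivAt_id' x).const_mul a).add_const b).pow 2).deriv.trans (by ring)

end Affine

section Trig

variable (a c d : ℝ)

theorem hasDerivAt_cos_add_sin (x : ℝ) :
    HasDerivAt (fun x => c * cos (a * x) + d * sin (a * x))
      (a * d * cos (a * x) + -(a * c) * sin (a * x)) x := by
  have hax : HasDerivAt (fun x => a * x) a x := by simpa using (hasDerivAt_id' x).const_mul a
  exact ((((hasDerivAt_cos _).comp x hax).const_mul c).fun_add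
    (((hasDerivAt_sin _).comp x hax).const_mul d)).congr_deriv (by ring)

theorem deriv_cos_add_sin :
    deriv (fun x => c * cos (a * x) + d * sin (a * x))
      = fun x => a * d * cos (a * x) + -(a * c) * sin (a * x) :=
  funext fun x => (hasDerivAt_cos_add_sin a c d x).deriv

theorem deriv_deriv_cos_add_sin :
    deriv (deriv fun x => c * cos (a * x) + d * sin (a * x))
      = fun x => -a ^ 2 * (c * cos (a * x) + d * sin (a * x)) := by
  rw [deriv_cos_add_sin, deriv_cos_add_sin]
  funext x
  ring

end Trig

theorem stmt_19_general (c₀ c₁ c₂ c₃ c₄ c₅ c₆ c₇ c₈ : ℝ)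
    (q u h lam₁ lam₄ : ℝ → ℝ)
    (hq : q = fun x => (c₁ * x + c₀) ^ 2)
    (hu : u = fun x => (c₂ * x + c₃) ^ 2)
    (hh : h = fun x => (c₄ * x + c₅) ^ 2)
    (hlam₄ : lam₄ = fun x => c₆ * (c₁ * x + c₀))
    (hlam₁ : lam₁ = fun x => c₇ * Real.cos (c₁ * x) + c₈ * Real.sin (c₁ * x)) :
    ∀ x : ℝ,
      2 * (h x) ^ 2 * deriv (deriv (deriv h)) x
        - deriv h x * (2 * h x * deriv (deriv h) x - (deriv h x) ^ 2) = 0 ∧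
      2 * q x * deriv (deriv q) x - (deriv q x) ^ 2 = 0 ∧
      2 * h x * u x * deriv (deriv u) x + 2 * h x * u x * deriv (deriv h) x
        - h x * (deriv u x) ^ 2 - u x * (deriv h x) ^ 2 = 0 ∧
      4 * q x * deriv (deriv lam₁) x + (deriv q x) ^ 2 * lam₁ x = 0 ∧
      2 * q x * deriv lam₄ x - lam₄ x * deriv q x = 0 := by
  subst hq hu hh hlam₄ hlam₁
  intro x
  simp only [deriv_affine_sq, deriv_const_mul_affine, deriv_deriv_cos_add_sin, deriv_const']
  refine ⟨by ring, by ring, by ring, by ring, by ring⟩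

theorem stmt_19 (c₀ c₁ c₂ c₃ c₄ c₅ c₆ c₇ c₈ : ℝ) (hc₁ : c₁ ≠ 0)
    (q u h lam₁ lam₄ : ℝ → ℝ)
    (hq : q = fun x => (c₁ * x + c₀) ^ 2)
    (hu : u = fun x => (c₂ * x + c₃) ^ 2)
    (hh : h = fun x => (c₄ * x + c₅) ^ 2)
    (hlam₄ : lam₄ = fun x => c₆ * (c₁ * x + c₀))
    (hlam₁ : lam₁ = fun x => c₇ * Real.cos (c₁ * x) + c₈ * Real.sin (c₁ * x)) :
    ∀ x : ℝ,
      2 * (h x) ^ 2 * deriv (deriv (deriv h)) x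
        - deriv h x * (2 * h x * deriv (deriv h) x - (deriv h x) ^ 2) = 0 ∧
      2 * q x * deriv (deriv q) x - (deriv q x) ^ 2 = 0 ∧
      2 * h x * u x * deriv (deriv u) x + 2 * h x * u x * deriv (deriv h) x
        - h x * (deriv u x) ^ 2 - u x * (deriv h x) ^ 2 = 0 ∧
      4 * q x * deriv (deriv lam₁) x + (deriv q x) ^ 2 * lam₁ x = 0 ∧
      2 * q x * deriv lam₄ x - lam₄ x * deriv q x = 0 :=
  stmt_19_general c₀ c₁ c₂ c₃ c₄ c₅ c₆ c₇ c₈ q u h lam₁ lam₄ hq hu hh hlam₄ hlam₁
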